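/- arXiv:2212.07974 — 4 statements merged into one kernel-verified Lean document; each statement's English description precedes it below -/
import Mathlib

section
/- Consider the function ρ(a) = 1/Γ(1-2a)² − 1/(Γ(1-a)·Γ(1-3a)) for a ∈ (0,1), where at points where the Gamma function has a pole the corresponding reciprocal term is interpreted as 0. Then there exists a unique α_* ∈ (0,1) with ρ(α_*) = 0; moreover α_* ∈ (2/3, 4/5), ρ(a) > 0 for all a ∈ (0, α_*), and ρ(a) < 0 for all a ∈ (α_*, 1). -/
/-!
For `0 < a < 1/3`, `ρ(a) > 0` is strict log-convexity of `Γ` at `1 - 2a`, the midpoint of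
`1 - a` and `1 - 3a`. On `[1/3, 2/3]` the subtracted term is `≤ 0` because `Γ ≤ 0` on `[-1, 0]`,
and the two terms never vanish together. For `a = 1 - t` with `0 < t < 1/3`, the functional
equation moves every argument to the right of `1`:
`ρ(1 - t) = 3t²(1 - 3t)(2 - 3t)/Γ(1 + 2t)² · (P(t) - Q(t))` with the rational function
`P(t) = 4(1 - 2t)²/(3(1 - 3t)(2 - 3t))` increasing and `Q(t) = Γ(1 + 2t)²/(Γ(1 + t)Γ(1 + 3t))`
decreasing. So `P - Q` has exactly one zero `τ`, and `α_* = 1 - τ`; it lies in `(1/5, 3/10)`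
because `P(1/5) = 6/7 < 43/45 ≤ Q(1/5)` and `Q(3/10) < Q(0) = 1 < P(3/10)`.

Log-convexity, the monotonicity of `Q` and the bound on `Q(1/5)` all come from comparing
Euler's products `Γ(s) = lim n^s n! / (s (s + 1) ⋯ (s + n))` factor by factor.
-/

open Real Finset Filter

/-- The function `ρ(a) = 1/Γ(1-2a)² − 1/(Γ(1-a)Γ(1-3a))`. In Mathlib's convention
`Real.Gamma` vanishes at nonpositive integers and `1/0 = 0`, so the reciprocal terms
vanish at the poles of the classical Gamma function. -/
noncomputable def rhoFn (a : ℝ) : ℝ :=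
  1 / Real.Gamma (1 - 2 * a) ^ 2 - 1 / (Real.Gamma (1 - a) * Real.Gamma (1 - 3 * a))

lemma mul_prod_range_le_prod_range {a b K : ℕ → ℝ} (ha : ∀ j, 0 ≤ a j) (hb : ∀ j, 0 ≤ b j)
    (hK : K 0 ≤ 1) (hstep : ∀ m, K (m + 1) * a m ≤ K m * b m) (n : ℕ) :
    K n * ∏ j ∈ range n, a j ≤ ∏ j ∈ range n, b j := by
  induction n with
  | zero => simpa using hK
  | succ n ih =>
    rw [prod_range_succ, prod_range_succ]
    calc K (n + 1) * ((∏ j ∈ range n, a j) * a n)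
        = K (n + 1) * a n * ∏ j ∈ range n, a j := by ring
      _ ≤ K n * b n * ∏ j ∈ range n, a j :=
        mul_le_mul_of_nonneg_right (hstep n) (prod_nonneg fun j _ => ha j)
      _ = b n * (K n * ∏ j ∈ range n, a j) := by ring
      _ ≤ b n * ∏ j ∈ range n, b j := mul_le_mul_of_nonneg_left ih (hb n)
      _ = (∏ j ∈ range n, b j) * b n := mul_comm _ _

namespace Real

lemma prod_GammaSeq {ι : Type*} [Fintype ι] (s : ι → ℝ) {n : ℕ} (hn : n ≠ 0) :
    ∏ i, GammaSeq (s i) n = (n : ℝ) ^ (∑ i, s i) * (n.factorial : ℝ) ^ Fintype.card ι /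
      ∏ j ∈ range (n + 1), ∏ i, (s i + j) := by
  have hn' : (0 : ℝ) < n := by positivity
  simp only [GammaSeq, prod_div_distrib, prod_mul_distrib, rpow_sum_of_pos hn', prod_const,
    card_univ]
  rw [Finset.prod_comm]

lemma mul_prod_Gamma_le_of_forall_mul_prod_le {ι : Type*} [Fintype ι] {u w : ι → ℝ} {c : ℝ}
    (hu : ∀ i, 0 < u i) (hw : ∀ i, 0 < w i) (hsum : ∑ i, u i = ∑ i, w i)
    (h : ∀ n : ℕ, c * ∏ j ∈ range (n + 1), ∏ i, (w i + j) ≤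
      ∏ j ∈ range (n + 1), ∏ i, (u i + j)) :
    c * ∏ i, Gamma (u i) ≤ ∏ i, Gamma (w i) := by
  have hpos : ∀ s : ι → ℝ, (∀ i, 0 < s i) → ∀ n : ℕ, 0 < ∏ j ∈ range (n + 1), ∏ i, (s i + j) :=
    fun s hs n => prod_pos fun j _ => prod_pos fun i _ => by linarith [hs i, j.cast_nonneg (α := ℝ)]
  refine le_of_tendsto_of_tendsto
    ((tendsto_finsetProd _ fun i _ => GammaSeq_tendsto_Gamma (u i)).const_mul c)
    (tendsto_finsetProd _ fun i _ => GammaSeq_tendsto_Gamma (w i)) ?_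
  filter_upwards [eventually_ne_atTop 0] with n hn
  rw [prod_GammaSeq u hn, prod_GammaSeq w hn, hsum, mul_div_assoc',
    div_le_div_iff₀ (hpos u hu n) (hpos w hw n), mul_comm c, mul_assoc]
  exact mul_le_mul_of_nonneg_left (h n) (by positivity)

lemma prod_Gamma_lt_of_prod_lt {ι : Type*} [Fintype ι] {u w : ι → ℝ}
    (hu : ∀ i, 0 < u i) (hw : ∀ i, 0 < w i) (hsum : ∑ i, u i = ∑ i, w i)
    (hlt : ∏ i, w i < ∏ i, u i) (hle : ∀ x : ℝ, 1 ≤ x → ∏ i, (w i + x) ≤ ∏ i, (u i + x)) :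
    ∏ i, Gamma (u i) < ∏ i, Gamma (w i) := by
  have hw₀ : 0 < ∏ i, w i := prod_pos fun i _ => hw i
  have hc : 1 < (∏ i, u i) / ∏ i, w i := (one_lt_div hw₀).mpr hlt
  -- The `j = 0` factors of the Euler products account exactly for the constant `∏ u / ∏ w > 1`.
  have hGamma := mul_prod_Gamma_le_of_forall_mul_prod_le (c := (∏ i, u i) / ∏ i, w i) hu hw hsum
    fun n => by
      simp only [prod_range_succ' _ n, Nat.cast_zero, add_zero, Nat.cast_succ]
      rw [mul_comm, mul_assoc, mul_div_cancel₀ _ hw₀.ne']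
      refine mul_le_mul_of_nonneg_right ?_ (prod_pos fun i _ => hu i).le
      exact prod_le_prod
        (fun j _ => prod_nonneg fun i _ => by linarith [hw i, j.cast_nonneg (α := ℝ)])
        fun j _ => hle _ (by linarith [j.cast_nonneg (α := ℝ)])
  have hΓ : 0 < ∏ i, Gamma (u i) := prod_pos fun i _ => Gamma_pos_of_pos (hu i)
  nlinarith

lemma Gamma_sq_lt_mul_Gamma {x y : ℝ} (hx : 0 < x) (hy : 0 < y) (hxy : x ≠ y) :
    Gamma ((x + y) / 2) ^ 2 < Gamma x * Gamma y := by
  simpa [Fin.prod_univ_two, sq] using prod_Gamma_lt_of_prod_lt (u := fun _ : Fin 2 => (x + y) / 2)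
    (w := ![x, y]) (fun _ => by positivity) (by simp [hx, hy, Fin.forall_fin_two])
    (by simp [Fin.sum_univ_two]; ring)
    (by simp [Fin.prod_univ_two]; nlinarith [sq_pos_of_ne_zero (sub_ne_zero.mpr hxy)])
    fun s _ => by simp [Fin.prod_univ_two]; nlinarith [sq_nonneg (x - y)]

lemma Gamma_neg_of_mem_Ioo {x : ℝ} (h₁ : -1 < x) (h₂ : x < 0) : Gamma x < 0 := by
  have hrec := Gamma_add_one h₂.ne
  have hpos := Gamma_pos_of_pos (show 0 < x + 1 by linarith)
  nlinarith

lemma Gamma_nonpos_of_mem_Icc {x : ℝ} (h₁ : -1 ≤ x) (h₂ : x ≤ 0) : Gamma x ≤ 0 := by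
  rcases h₂.lt_or_eq with h₂ | rfl
  · have hrec := Gamma_add_one h₂.ne
    have hnonneg := Gamma_nonneg_of_nonneg (show 0 ≤ x + 1 by linarith)
    nlinarith
  · rw [Gamma_zero]

lemma one_div_Gamma_eq_div_Gamma_add_one {s : ℝ} (hs : s ≠ 0) :
    1 / Gamma s = s / Gamma (s + 1) := by
  rw [Gamma_add_one hs, div_mul_cancel_left₀ hs, one_div]

lemma one_div_Gamma_eq_prod_div_Gamma_add_nat {s : ℝ} {n : ℕ} (hs : ∀ k < n, s + k ≠ 0) :
    1 / Gamma s = (∏ k ∈ range n, (s + k)) / Gamma (s + n) := by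
  induction n with
  | zero => simp
  | succ n ih =>
    rw [ih fun k hk => hs k (by omega), div_eq_mul_one_div,
      one_div_Gamma_eq_div_Gamma_add_one (hs n (by omega)), prod_range_succ]
    push_cast
    ring_nf

end Real

noncomputable def gammaRatio (t : ℝ) : ℝ :=
  Gamma (1 + 2 * t) ^ 2 / (Gamma (1 + t) * Gamma (1 + 3 * t))

noncomputable def polyRatio (t : ℝ) : ℝ :=
  4 * (1 - 2 * t) ^ 2 / (3 * (1 - 3 * t) * (2 - 3 * t))

lemma gammaRatio_zero : gammaRatio 0 = 1 := by
  simp [gammaRatio]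

lemma gammaRatio_strictAntiOn : StrictAntiOn gammaRatio (Set.Ici 0) := by
  intro s hs t ht hst
  simp only [Set.mem_Ici] at hs ht
  have hden : ∀ r : ℝ, 0 ≤ r → 0 < Gamma (1 + r) * Gamma (1 + 3 * r) := fun r hr =>
    mul_pos (Gamma_pos_of_pos (by linarith)) (Gamma_pos_of_pos (by linarith))
  rw [gammaRatio, gammaRatio, div_lt_div_iff₀ (hden t ht) (hden s hs)]
  have key := prod_Gamma_lt_of_prod_lt (u := ![1 + 2 * t, 1 + 2 * t, 1 + s, 1 + 3 * s])
    (w := ![1 + 2 * s, 1 + 2 * s, 1 + t, 1 + 3 * t])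
    (fun i => by fin_cases i <;> simp <;> linarith)
    (fun i => by fin_cases i <;> simp <;> linarith)
    (by simp [Fin.sum_univ_four]; ring)
    (by simp [Fin.prod_univ_four]
        nlinarith [mul_pos (sub_pos.mpr hst) (by nlinarith : (0 : ℝ) < s + t + 4 * s * t)])
    -- With `y = 1 + x`, `(y + r)(y + 3r) / (y + 2r)² = 1 - (r / (y + 2r))²` decreases in `r ≥ 0`.
    (fun x hx => by
      simp [Fin.prod_univ_four]
      nlinarith [mul_nonneg (mul_nonneg (sub_pos.mpr hst).le (by linarith : (0 : ℝ) ≤ 1 + x))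
        (by nlinarith : (0 : ℝ) ≤ (s + t) * (1 + x) + 4 * s * t)])
  simp only [Fin.prod_univ_four] at key
  simpa [sq, mul_assoc, mul_comm, mul_left_comm] using key

lemma polyRatio_strictMonoOn : StrictMonoOn polyRatio (Set.Iio (1 / 3)) := by
  intro s hs t ht hst
  simp only [Set.mem_Iio] at hs ht
  rw [polyRatio, polyRatio, div_lt_div_iff₀ (by nlinarith) (by nlinarith)]
  nlinarith [mul_pos (sub_pos.mpr hst) (show (0 : ℝ) < 1 - s - t by linarith)]

lemma continuousOn_gammaRatio : ContinuousOn gammaRatio (Set.Ici 0) := by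
  have hΓ : ∀ c : ℝ, 0 ≤ c → ContinuousOn (fun t => Gamma (1 + c * t)) (Set.Ici 0) :=
    fun c hc => differentiableOn_Gamma_Ioi.continuousOn.comp (by fun_prop)
      fun t ht => show 0 < 1 + c * t by nlinarith [Set.mem_Ici.mp ht]
  have h₁ : ContinuousOn (fun t => Gamma (1 + t)) (Set.Ici 0) := by simpa using hΓ 1 one_pos.le
  refine ((hΓ 2 (by norm_num)).pow 2).div (h₁.mul (hΓ 3 (by norm_num))) fun t ht => ?_
  have := Set.mem_Ici.mp ht
  exact (mul_pos (Gamma_pos_of_pos (by linarith)) (Gamma_pos_of_pos (by linarith))).ne'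

lemma continuousOn_polyRatio : ContinuousOn polyRatio (Set.Iio (1 / 3)) :=
  ContinuousOn.div (by fun_prop) (by fun_prop) fun t ht => by
    have := Set.mem_Iio.mp ht; nlinarith

lemma Gamma_seven_fifths_sq_ge :
    43 / 45 * (Gamma (6 / 5) * Gamma (8 / 5)) ≤ Gamma (7 / 5) ^ 2 := by
  -- `K m` decreases by `1 / (25 (m + 9/10) (m + 19/10))`, which absorbs the factor
  -- `(6/5 + m)(8/5 + m) / (7/5 + m)² = 1 - 1 / (25 (7/5 + m)²)`; `K 0 = 1` fixes the constant.
  set K : ℕ → ℝ := fun m => 43 / 45 + 1 / (25 * (m + 9 / 10)) with hK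
  have htele := mul_prod_range_le_prod_range (K := K) (a := fun j => (7 / 5 + j) * (7 / 5 + j))
    (b := fun j => (6 / 5 + j) * (8 / 5 + j)) (fun j => by positivity) (fun j => by positivity)
    (by norm_num [hK]) fun m => by
      have hm := m.cast_nonneg (α := ℝ)
      simp only [hK, Nat.cast_succ]
      rw [div_add_div _ _ (by norm_num) (by positivity), div_add_div _ _ (by norm_num) (by positivity),
        div_mul_eq_mul_div, div_mul_eq_mul_div, div_le_div_iff₀ (by positivity) (by positivity)]
      nlinarith [mul_nonneg hm hm, mul_nonneg (mul_nonneg hm hm) hm,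
        mul_nonneg (mul_nonneg (mul_nonneg hm hm) hm) hm]
  have key := mul_prod_Gamma_le_of_forall_mul_prod_le (u := ![6 / 5, 8 / 5]) (w := fun _ => 7 / 5)
    (c := 43 / 45) (fun i => by fin_cases i <;> norm_num) (fun _ => by norm_num)
    (by norm_num [Fin.sum_univ_two]) fun n => by
      simp only [Fin.prod_univ_two, Matrix.cons_val_zero, Matrix.cons_val_one]
      refine le_trans (mul_le_mul_of_nonneg_right ?_ (prod_nonneg fun j _ => by positivity))
        (htele (n + 1))
      simp only [hK]
      have : (0 : ℝ) ≤ 1 / (25 * ((n + 1 : ℕ) + 9 / 10)) := by positivity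
      linarith
  simpa [Fin.prod_univ_two, sq] using key

lemma le_gammaRatio_one_fifth : 43 / 45 ≤ gammaRatio (1 / 5) := by
  have hden : 0 < Gamma (6 / 5) * Gamma (8 / 5) :=
    mul_pos (Gamma_pos_of_pos (by norm_num)) (Gamma_pos_of_pos (by norm_num))
  rw [gammaRatio, le_div_iff₀ (by norm_num; exact hden)]
  norm_num
  exact Gamma_seven_fifths_sq_ge

lemma polyRatio_sub_gammaRatio_strictMonoOn :
    StrictMonoOn (fun t => polyRatio t - gammaRatio t) (Set.Ico 0 (1 / 3)) := fun _ hs _ ht hst =>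
  sub_lt_sub (polyRatio_strictMonoOn hs.2 ht.2 hst) (gammaRatio_strictAntiOn hs.1 ht.1 hst)

lemma exists_polyRatio_eq_gammaRatio :
    ∃ τ ∈ Set.Ioo (1 / 5 : ℝ) (3 / 10), polyRatio τ = gammaRatio τ := by
  have hlow : polyRatio (1 / 5) - gammaRatio (1 / 5) < 0 := by
    norm_num [polyRatio]; linarith [le_gammaRatio_one_fifth]
  have hhigh : 0 < polyRatio (3 / 10) - gammaRatio (3 / 10) := by
    have := gammaRatio_strictAntiOn (Set.mem_Ici.mpr le_rfl) (Set.mem_Ici.mpr (by norm_num))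
      (by norm_num : (0 : ℝ) < 3 / 10)
    rw [gammaRatio_zero] at this
    norm_num [polyRatio]; linarith
  have hcont : ContinuousOn (fun t => polyRatio t - gammaRatio t) (Set.Icc (1 / 5) (3 / 10)) :=
    (continuousOn_polyRatio.mono fun t ht => by simp at ht ⊢; linarith [ht.2]).sub
      (continuousOn_gammaRatio.mono fun t ht => by simp at ht ⊢; linarith [ht.1])
  obtain ⟨τ, hτ, hτ0⟩ := intermediate_value_Ioo (by norm_num) hcont ⟨hlow, hhigh⟩
  exact ⟨τ, hτ, sub_eq_zero.mp hτ0⟩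

lemma rhoFn_pos_of_lt_one_third {a : ℝ} (h₀ : 0 < a) (h : a < 1 / 3) : 0 < rhoFn a := by
  have hlt := Gamma_sq_lt_mul_Gamma (x := 1 - a) (y := 1 - 3 * a) (by linarith) (by linarith)
    (by intro h; linarith)
  rw [show (1 - a + (1 - 3 * a)) / 2 = 1 - 2 * a by ring] at hlt
  have hsq : 0 < Gamma (1 - 2 * a) ^ 2 := pow_pos (Gamma_pos_of_pos (by linarith)) 2
  rw [rhoFn, sub_pos]
  exact one_div_lt_one_div_of_lt hsq hlt

lemma rhoFn_pos_of_mem_Icc {a : ℝ} (h₁ : 1 / 3 ≤ a) (h₂ : a ≤ 2 / 3) : 0 < rhoFn a := by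
  have hfirst : 0 ≤ 1 / Gamma (1 - 2 * a) ^ 2 := by positivity
  have hΓ₁ : 0 < Gamma (1 - a) := Gamma_pos_of_pos (by linarith)
  have hsecond : 1 / (Gamma (1 - a) * Gamma (1 - 3 * a)) ≤ 0 :=
    one_div_nonpos.mpr (mul_nonpos_of_nonneg_of_nonpos hΓ₁.le
      (Gamma_nonpos_of_mem_Icc (by linarith) (by linarith)))
  rw [rhoFn]
  rcases eq_or_ne a (1 / 2) with rfl | ha
  · have : 1 / (Gamma (1 - 1 / 2) * Gamma (1 - 3 * (1 / 2))) < 0 :=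
      one_div_neg.mpr (mul_neg_of_pos_of_neg hΓ₁ (Gamma_neg_of_mem_Ioo (by norm_num) (by norm_num)))
    linarith
  · have hne : Gamma (1 - 2 * a) ≠ 0 := Gamma_ne_zero fun m hm => by
      rcases m with _ | m
      · exact ha (by simp at hm; linarith)
      · push_cast at hm; linarith
    have : 0 < 1 / Gamma (1 - 2 * a) ^ 2 := by positivity
    linarith

lemma rhoFn_one_sub_eq {t : ℝ} (h₀ : 0 < t) (h : t < 1 / 3) :
    rhoFn (1 - t) = 3 * t ^ 2 * (1 - 3 * t) * (2 - 3 * t) / Gamma (1 + 2 * t) ^ 2 *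
      (polyRatio t - gammaRatio t) := by
  have e₁ := one_div_Gamma_eq_prod_div_Gamma_add_nat (s := 2 * t - 1) (n := 2) (by
    intro k hk; interval_cases k <;> norm_num <;> linarith)
  have e₂ := one_div_Gamma_eq_prod_div_Gamma_add_nat (s := t) (n := 1) (by
    intro k hk; interval_cases k; norm_num; linarith)
  have e₃ := one_div_Gamma_eq_prod_div_Gamma_add_nat (s := 3 * t - 2) (n := 3) (by
    intro k hk; interval_cases k <;> norm_num <;> linarith)
  simp only [prod_range_succ, prod_range_zero, Nat.cast_ofNat, Nat.cast_zero, Nat.cast_one]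
    at e₁ e₂ e₃
  have h₁ : 1 - t * 3 ≠ 0 := by linarith
  have h₂ : 2 - t * 3 ≠ 0 := by linarith
  rw [show 2 * t - 1 + 2 = 1 + 2 * t by ring] at e₁
  rw [add_comm t 1] at e₂
  rw [show 3 * t - 2 + 3 = 1 + 3 * t by ring] at e₃
  rw [rhoFn, show 1 - 2 * (1 - t) = 2 * t - 1 by ring, show 1 - (1 - t) = t by ring,
    show 1 - 3 * (1 - t) = 3 * t - 2 by ring, ← one_div_pow, ← one_div_mul_one_div, e₁, e₂, e₃,
    polyRatio, gammaRatio]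
  field_simp [h₁, h₂]
  ring

lemma rhoFn_one_sub_pos {t : ℝ} (h₀ : 0 < t) (h : t < 1 / 3) (hlt : gammaRatio t < polyRatio t) :
    0 < rhoFn (1 - t) := by
  rw [rhoFn_one_sub_eq h₀ h]
  have h₁ : 0 < 1 - 3 * t := by linarith
  have h₂ : 0 < 2 - 3 * t := by linarith
  exact mul_pos (by positivity) (sub_pos.mpr hlt)

lemma rhoFn_one_sub_neg {t : ℝ} (h₀ : 0 < t) (h : t < 1 / 3) (hlt : polyRatio t < gammaRatio t) :
    rhoFn (1 - t) < 0 := by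
  rw [rhoFn_one_sub_eq h₀ h]
  have h₁ : 0 < 1 - 3 * t := by linarith
  have h₂ : 0 < 2 - 3 * t := by linarith
  exact mul_neg_of_pos_of_neg (by positivity) (sub_neg.mpr hlt)

/-- There is a unique zero `α_*` of `ρ` in `(0,1)`; it lies in `(2/3, 4/5)`,
`ρ > 0` before it and `ρ < 0` after it. -/
theorem rhoFn_unique_zero :
    ∃ αs : ℝ, αs ∈ Set.Ioo (0 : ℝ) 1 ∧ rhoFn αs = 0 ∧
      (∀ a ∈ Set.Ioo (0 : ℝ) 1, rhoFn a = 0 → a = αs) ∧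
      αs ∈ Set.Ioo (2/3 : ℝ) (4/5 : ℝ) ∧
      (∀ a ∈ Set.Ioo (0 : ℝ) αs, 0 < rhoFn a) ∧
      (∀ a ∈ Set.Ioo αs (1 : ℝ), rhoFn a < 0) := by
  obtain ⟨τ, ⟨hτ₁, hτ₂⟩, hτ⟩ := exists_polyRatio_eq_gammaRatio
  have hmono := polyRatio_sub_gammaRatio_strictMonoOn
  have hpos : ∀ a ∈ Set.Ioo 0 (1 - τ), 0 < rhoFn a := by
    rintro a ⟨ha₀, ha⟩
    rcases lt_or_ge a (1 / 3) with h₁ | h₁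
    · exact rhoFn_pos_of_lt_one_third ha₀ h₁
    rcases le_or_gt a (2 / 3) with h₂ | h₂
    · exact rhoFn_pos_of_mem_Icc h₁ h₂
    rw [← sub_sub_cancel 1 a]
    have := hmono ⟨by linarith, by linarith⟩ ⟨by linarith, by linarith⟩ (show τ < 1 - a by linarith)
    exact rhoFn_one_sub_pos (by linarith) (by linarith) (by simp only at this; linarith)
  have hneg : ∀ a ∈ Set.Ioo (1 - τ) 1, rhoFn a < 0 := by
    rintro a ⟨ha, ha₁⟩
    rw [← sub_sub_cancel 1 a]
    have := hmono ⟨by linarith, by linarith⟩ ⟨by linarith, by linarith⟩ (show 1 - a < τ by linarith)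
    exact rhoFn_one_sub_neg (by linarith) (by linarith) (by simp only at this; linarith)
  refine ⟨1 - τ, ⟨by linarith, by linarith⟩, ?_, fun a ha hρ => ?_, ⟨by linarith, by linarith⟩,
    hpos, hneg⟩
  · rw [rhoFn_one_sub_eq (by linarith) (by linarith), hτ, sub_self, mul_zero]
  · rcases lt_trichotomy a (1 - τ) with h | h | h
    · exact absurd hρ (hpos a ⟨ha.1, h⟩).ne'
    · exact h
    · exact absurd hρ (hneg a ⟨h, ha.2⟩).ne
end

section
/- Let β ∈ (0,1). Then there exists a unique α_*(β) ∈ ((β+1)/2, 1) such that 1/Γ(β − α)² = 1/(Γ(β)·Γ(β − 2α)) at α = α_*(β), and for every α with α_*(β) < α < 1 the function x ↦ φ(-α, β, -x) is not log-concave on [0,∞). -/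
/-!
Near `0`, `f(x) = φ(-α, β, -x) = A₀ - A₁ x + A₂ x² + O(x³)` with `A₀ = 1/Γ(β)`, `A₁ = 1/Γ(β-α)`,
`A₂ = 1/(2Γ(β-2α))`; the series converges for `|x| < 1`, since for `0 < α ≤ 1` the reflection
bound `|1/Γ(s)| ≤ Γ(1-s)/π` makes its coefficients eventually at most `1/π`. Then
`f(x)² - f(0) f(2x) = (A₁² - 2A₀A₂) x² + O(x³)`, so log-concavity fails at the midpoint of `0`
and `2x` as soon as `A₁² < 2A₀A₂`, that is `1/Γ(β-α)² < 1/(Γ(β)Γ(β-2α))`.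

For `α ∈ ((β+1)/2, 1)` we have `Γ(β-α) < 0 < Γ(β-2α)`, and `2 log|Γ(β-α)| - log Γ(β-2α)` is strictly
increasing in `α`: its derivative `2(ψ(β-2α) - ψ(β-α))` is positive by `ψ(x+1) = ψ(x) + 1/x` and
the monotonicity of `ψ = Γ'/Γ` on `(0, ∞)` (log-convexity of `Γ`). Hence the critical equation has
at most one root `α_*`, the strict inequality holds for `α > α_*`, and a root exists by the
intermediate value theorem, since `1/Γ(β-2α)` vanishes at `α = (β+1)/2` and the inequality is
reversed at `α = 1`.
-/

/-- The Wright function `φ(ρ, β, x) = ∑ x^n / (n! Γ(β + ρ n))`. -/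
noncomputable def wright (ρ β x : ℝ) : ℝ :=
  ∑' n : ℕ, x ^ n / ((n.factorial : ℝ) * Real.Gamma (β + ρ * n))

/-- `f` is log-concave on the set `S`. -/
def LogConcaveOn' (f : ℝ → ℝ) (S : Set ℝ) : Prop :=
  ∀ x ∈ S, ∀ y ∈ S, ∀ t ∈ Set.Icc (0 : ℝ) 1,
    f ((1 - t) * x + t * y) ≥ f x ^ (1 - t) * f y ^ t

open Real Set Filter Topology Asymptotics FormalMultilinearSeries

namespace Real

lemma ne_neg_natCast_of_Gamma_ne_zero {x : ℝ} (h : Gamma x ≠ 0) : ∀ m : ℕ, x ≠ -m :=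
  fun m hm => h (hm ▸ Gamma_neg_nat_eq_zero m)

lemma Gamma_neg_of_mem_Ioo_neg_one_zero {x : ℝ} (hx : x ∈ Ioo (-1) 0) : Gamma x < 0 := by
  have h := Gamma_add_one hx.2.ne
  have hpos : 0 < Gamma (x + 1) := Gamma_pos_of_pos (by linarith [hx.1])
  nlinarith [hx.2]

lemma Gamma_pos_of_mem_Ioo_neg_two_neg_one {x : ℝ} (hx : x ∈ Ioo (-2) (-1)) : 0 < Gamma x := by
  have h := Gamma_add_one (s := x) (by linarith [hx.2])
  have hneg : Gamma (x + 1) < 0 :=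
    Gamma_neg_of_mem_Ioo_neg_one_zero ⟨by linarith [hx.1], by linarith [hx.2]⟩
  nlinarith [hx.2]

lemma continuous_inv_Gamma : Continuous fun x : ℝ => (Gamma x)⁻¹ := by
  have h : ∀ x : ℝ, (Gamma x)⁻¹ = ((Complex.Gamma x)⁻¹).re := fun x => by
    rw [Complex.Gamma_ofReal, ← Complex.ofReal_inv, Complex.ofReal_re]
  simp only [h]
  exact Complex.continuous_re.comp
    (Complex.differentiable_one_div_Gamma.continuous.comp Complex.continuous_ofReal)

lemma inv_Gamma_eq_Gamma_one_sub_mul_sin {s : ℝ} (hs : s < 1) :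
    (Gamma s)⁻¹ = Gamma (1 - s) * sin (π * s) / π := by
  have hrefl := Gamma_mul_Gamma_one_sub s
  have hG : 0 < Gamma (1 - s) := Gamma_pos_of_pos (by linarith)
  rcases eq_or_ne (sin (π * s)) 0 with hsin | hsin
  · rw [hsin, div_zero, mul_eq_zero] at hrefl
    rw [hrefl.resolve_right hG.ne', hsin]
    simp
  · rw [eq_div_iff hsin] at hrefl
    have hΓ : Gamma s ≠ 0 := fun h => pi_ne_zero (by simp [h] at hrefl; exact hrefl.symm)
    rw [inv_eq_one_div, div_eq_div_iff hΓ pi_ne_zero]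
    linear_combination -hrefl

lemma abs_inv_Gamma_le {s : ℝ} (hs : s < 1) : |(Gamma s)⁻¹| ≤ Gamma (1 - s) / π := by
  have hG : 0 < Gamma (1 - s) := Gamma_pos_of_pos (by linarith)
  rw [inv_Gamma_eq_Gamma_one_sub_mul_sin hs, abs_div, abs_mul, abs_of_pos hG, abs_of_pos pi_pos]
  gcongr
  exact mul_le_of_le_one_right hG.le (abs_sin_le_one _)

lemma hasDerivAt_log_Gamma {x : ℝ} (hx : ∀ m : ℕ, x ≠ -m) :
    HasDerivAt (fun y => log (Gamma y)) (logDeriv Gamma x) x :=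
  (differentiableAt_Gamma hx).hasDerivAt.log (Gamma_ne_zero hx)

lemma logDeriv_Gamma_add_one {x : ℝ} (hx : ∀ m : ℕ, x ≠ -m) :
    logDeriv Gamma (x + 1) = logDeriv Gamma x + 1 / x := by
  have hx0 : x ≠ 0 := by simpa using hx 0
  have hx1 : ∀ m : ℕ, x + 1 ≠ -m := fun m h => hx (m + 1) (by push_cast; linarith)
  have hshift : logDeriv Gamma (x + 1) = logDeriv (fun y => Gamma (y + 1)) x := by
    have := logDeriv_comp (f := Gamma) (g := fun y : ℝ => y + 1)
      (differentiableAt_Gamma hx1) (differentiableAt_id.add_const 1)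
    simp only [deriv_add_const, deriv_id'', mul_one] at this
    exact this.symm
  have hrec : (fun y => Gamma (y + 1)) =ᶠ[𝓝 x] fun y => y * Gamma y := by
    filter_upwards [eventually_ne_nhds hx0] with y hy using Gamma_add_one hy
  rw [hshift, (logDeriv_congr_nhds hrec).eq_of_nhds, logDeriv_mul (f := fun y => y) x hx0
    (Gamma_ne_zero hx) differentiableAt_fun_id (differentiableAt_Gamma hx), logDeriv_id', add_comm]

lemma monotoneOn_logDeriv_Gamma : MonotoneOn (logDeriv Gamma) (Ioi 0) := by
  have hderiv : ∀ x ∈ Ioi (0 : ℝ), HasDerivAt (log ∘ Gamma) (logDeriv Gamma x) x := fun x hx =>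
    hasDerivAt_log_Gamma (ne_neg_natCast_of_Gamma_ne_zero (Gamma_pos_of_pos hx).ne')
  intro x hx y hy hxy
  rw [← (hderiv x hx).deriv, ← (hderiv y hy).deriv]
  exact convexOn_log_Gamma.monotoneOn_deriv (fun z hz => (hderiv z hz).differentiableAt) hx hy hxy

lemma logDeriv_Gamma_lt {u v : ℝ} (hu : u ∈ Ioo (-1) 0) (hv : v ∈ Ioo (-2) (-1))
    (huv : u ≤ v + 1) :
    logDeriv Gamma u < logDeriv Gamma v := by
  have hv₁ : v + 1 ∈ Ioo (-1) 0 := ⟨by linarith [hv.1], by linarith [hv.2]⟩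
  have hu' := ne_neg_natCast_of_Gamma_ne_zero (Gamma_neg_of_mem_Ioo_neg_one_zero hu).ne
  have hv' := ne_neg_natCast_of_Gamma_ne_zero (Gamma_pos_of_mem_Ioo_neg_two_neg_one hv).ne'
  have hv₁' := ne_neg_natCast_of_Gamma_ne_zero (Gamma_neg_of_mem_Ioo_neg_one_zero hv₁).ne
  have hmono := monotoneOn_logDeriv_Gamma (a := u + 1) (b := v + 1 + 1)
    (by simp; linarith [hu.1]) (by simp; linarith [hv.1]) (by linarith)
  rw [logDeriv_Gamma_add_one hu', logDeriv_Gamma_add_one hv₁', logDeriv_Gamma_add_one hv'] at hmono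
  have h₁ : 1 / (v + 1) ≤ 1 / u := one_div_le_one_div_of_neg_of_le (by linarith [hv.2]) huv
  have h₂ : 1 / v < 0 := one_div_neg.mpr (by linarith [hv.2])
  linarith

end Real

noncomputable def logGammaRatio (β a : ℝ) : ℝ :=
  2 * log (Gamma (β - a)) - log (Gamma (β - 2 * a))

section CriticalEquation

variable {β a : ℝ}

lemma sub_mem_Ioo_of_mem_Ioo (hβ : β ∈ Ioo 0 1) (ha : a ∈ Ioo ((β + 1) / 2) 1) :
    β - a ∈ Ioo (-1) 0 ∧ β - 2 * a ∈ Ioo (-2) (-1) := by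
  obtain ⟨hβ₀, hβ₁⟩ := hβ
  obtain ⟨ha₀, ha₁⟩ := ha
  exact ⟨⟨by linarith, by linarith⟩, ⟨by linarith, by linarith⟩⟩

lemma hasDerivAt_logGammaRatio (hβ : β ∈ Ioo 0 1) (ha : a ∈ Ioo ((β + 1) / 2) 1) :
    HasDerivAt (logGammaRatio β)
      (2 * (logDeriv Gamma (β - 2 * a) - logDeriv Gamma (β - a))) a := by
  obtain ⟨hu, hv⟩ := sub_mem_Ioo_of_mem_Ioo hβ ha
  have h₁ := (hasDerivAt_log_Gamma (ne_neg_natCast_of_Gamma_ne_zero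
    (Gamma_neg_of_mem_Ioo_neg_one_zero hu).ne)).comp a ((hasDerivAt_id a).const_sub β)
  have h₂ := (hasDerivAt_log_Gamma (ne_neg_natCast_of_Gamma_ne_zero
    (Gamma_pos_of_mem_Ioo_neg_two_neg_one hv).ne')).comp a
    (((hasDerivAt_id a).const_mul 2).const_sub β)
  exact ((h₁.const_mul 2).sub h₂).congr_deriv (by ring)

lemma strictMonoOn_logGammaRatio (hβ : β ∈ Ioo 0 1) :
    StrictMonoOn (logGammaRatio β) (Ioo ((β + 1) / 2) 1) := by
  refine strictMonoOn_of_deriv_pos (convex_Ioo _ _)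
    (fun a ha => (hasDerivAt_logGammaRatio hβ ha).continuousAt.continuousWithinAt) fun a ha => ?_
  rw [interior_Ioo] at ha
  obtain ⟨hu, hv⟩ := sub_mem_Ioo_of_mem_Ioo hβ ha
  rw [(hasDerivAt_logGammaRatio hβ ha).deriv]
  have := logDeriv_Gamma_lt hu hv (by linarith [ha.2])
  linarith

lemma log_Gamma_sq_sub_log_Gamma_mul (hβ : β ∈ Ioo 0 1) (ha : a ∈ Ioo ((β + 1) / 2) 1) :
    log (Gamma (β - a) ^ 2) - log (Gamma β * Gamma (β - 2 * a)) =
      logGammaRatio β a - log (Gamma β) := by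
  obtain ⟨hu, hv⟩ := sub_mem_Ioo_of_mem_Ioo hβ ha
  rw [log_pow, log_mul (Gamma_pos_of_pos hβ.1).ne' (Gamma_pos_of_mem_Ioo_neg_two_neg_one hv).ne',
    logGammaRatio]
  push_cast
  ring

lemma one_div_Gamma_sq_lt_iff (hβ : β ∈ Ioo 0 1) (ha : a ∈ Ioo ((β + 1) / 2) 1) :
    1 / Gamma (β - a) ^ 2 < 1 / (Gamma β * Gamma (β - 2 * a)) ↔
      log (Gamma β) < logGammaRatio β a := by
  obtain ⟨hu, hv⟩ := sub_mem_Ioo_of_mem_Ioo hβ ha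
  have hX := sq_pos_of_neg (Gamma_neg_of_mem_Ioo_neg_one_zero hu)
  have hY := mul_pos (Gamma_pos_of_pos hβ.1) (Gamma_pos_of_mem_Ioo_neg_two_neg_one hv)
  rw [one_div_lt_one_div hX hY, ← log_lt_log_iff hY hX, ← sub_pos,
    log_Gamma_sq_sub_log_Gamma_mul hβ ha, sub_pos]

lemma one_div_Gamma_sq_eq_iff (hβ : β ∈ Ioo 0 1) (ha : a ∈ Ioo ((β + 1) / 2) 1) :
    1 / Gamma (β - a) ^ 2 = 1 / (Gamma β * Gamma (β - 2 * a)) ↔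
      logGammaRatio β a = log (Gamma β) := by
  obtain ⟨hu, hv⟩ := sub_mem_Ioo_of_mem_Ioo hβ ha
  have hX := sq_pos_of_neg (Gamma_neg_of_mem_Ioo_neg_one_zero hu)
  have hY := mul_pos (Gamma_pos_of_pos hβ.1) (Gamma_pos_of_mem_Ioo_neg_two_neg_one hv)
  rw [one_div, one_div, inv_inj, ← log_injOn_pos.eq_iff hX hY, ← sub_eq_zero,
    log_Gamma_sq_sub_log_Gamma_mul hβ ha, sub_eq_zero]

lemma exists_one_div_Gamma_sq_eq (hβ : β ∈ Ioo 0 1) :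
    ∃ a ∈ Ioo ((β + 1) / 2) 1, 1 / Gamma (β - a) ^ 2 = 1 / (Gamma β * Gamma (β - 2 * a)) := by
  obtain ⟨hβ₀, hβ₁⟩ := hβ
  set F := fun a => 1 / Gamma (β - a) ^ 2 - 1 / (Gamma β * Gamma (β - 2 * a))
  have hF : Continuous F := by
    simp only [F, one_div, mul_inv, ← inv_pow]
    exact ((continuous_inv_Gamma.comp (by fun_prop)).pow 2).sub
      (continuous_const.mul (continuous_inv_Gamma.comp (by fun_prop)))
  -- `β - 2a = -1` is a pole of `Γ` at the left endpoint, so there the second term is `1 / 0 = 0`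
  have hleft : 0 < F ((β + 1) / 2) := by
    have hpole : Gamma (β - 2 * ((β + 1) / 2)) = 0 := by
      rw [show β - 2 * ((β + 1) / 2) = -(1 : ℕ) by push_cast; ring, Gamma_neg_nat_eq_zero]
    have hG := Gamma_neg_of_mem_Ioo_neg_one_zero (x := β - (β + 1) / 2) ⟨by linarith, by linarith⟩
    simp only [F, hpole, mul_zero, div_zero, sub_zero]
    exact one_div_pos.mpr (sq_pos_of_neg hG)
  have hright : F 1 < 0 := by
    have h₁ : Gamma β = (β - 1) * Gamma (β - 1) := by
      rw [← Gamma_add_one (by linarith : β - 1 ≠ 0)]; ring_nf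
    have h₂ : Gamma (β - 1) = (β - 2) * Gamma (β - 2) := by
      rw [← Gamma_add_one (by linarith : β - 2 ≠ 0)]; ring_nf
    have hG := Gamma_pos_of_mem_Ioo_neg_two_neg_one (x := β - 2) ⟨by linarith, by linarith⟩
    have hlt : Gamma β * Gamma (β - 2) < Gamma (β - 1) ^ 2 := by
      rw [h₁, h₂]
      nlinarith [mul_pos hG hG]
    simp only [F, mul_one, sub_neg]
    exact one_div_lt_one_div_of_lt (mul_pos (Gamma_pos_of_pos hβ₀) hG) hlt
  obtain ⟨a, ha, hFa⟩ := intermediate_value_Ioo' (by linarith) hF.continuousOn ⟨hright, hleft⟩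
  exact ⟨a, ha, sub_eq_zero.mp hFa⟩

end CriticalEquation

lemma LogConcaveOn'.mul_le_sq {f : ℝ → ℝ} {S : Set ℝ} (hf : LogConcaveOn' f S) {x y : ℝ}
    (hx : x ∈ S) (hy : y ∈ S) (hfx : 0 ≤ f x) :
    f x * f y ≤ f ((x + y) / 2) ^ 2 := by
  have h := hf x hx y hy (1 / 2) ⟨by norm_num, by norm_num⟩
  rw [show (1 - 1 / 2 : ℝ) * x + 1 / 2 * y = (x + y) / 2 by ring,
    show (1 : ℝ) - 1 / 2 = 1 / 2 by norm_num, ← sqrt_eq_rpow, ← sqrt_eq_rpow, ← sqrt_mul hfx] at h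
  exact (sqrt_le_iff.mp h).2

lemma tendsto_div_sq_of_isBigO {f : ℝ → ℝ} {a₀ a₁ a₂ : ℝ}
    (hf : (fun x => f x - (a₀ + a₁ * x + a₂ * x ^ 2)) =O[𝓝 0] fun x => x ^ 3) :
    Tendsto (fun x => (f x - a₀ - a₁ * x) / x ^ 2) (𝓝[≠] 0) (𝓝 a₂) := by
  have hrem : (fun x => (f x - (a₀ + a₁ * x + a₂ * x ^ 2)) / x ^ 2) =O[𝓝[≠] 0] fun x => x := by
    refine ((hf.mono nhdsWithin_le_nhds).mul (isBigO_refl (fun x : ℝ => (x ^ 2)⁻¹) _)).congr'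
      (Eventually.of_forall fun x => div_eq_mul_inv _ _) ?_
    filter_upwards [self_mem_nhdsWithin] with x hx
    field_simp [show x ≠ 0 from hx]
  have hlim := (hrem.trans_tendsto (tendsto_nhdsWithin_of_tendsto_nhds tendsto_id)).const_add a₂
  rw [add_zero] at hlim
  refine hlim.congr' ?_
  filter_upwards [self_mem_nhdsWithin] with x hx
  field_simp [show x ≠ 0 from hx]
  ring

theorem not_logConcaveOn_Ici_of_isBigO {f : ℝ → ℝ} {a₀ a₁ a₂ : ℝ}
    (hf : (fun x => f x - (a₀ + a₁ * x + a₂ * x ^ 2)) =O[𝓝 0] fun x => x ^ 3)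
    (ha₀ : 0 < a₀) (h : a₁ ^ 2 < 2 * a₀ * a₂) : ¬ LogConcaveOn' f (Ici 0) := by
  set g := fun x => (f x - a₀ - a₁ * x) / x ^ 2
  have hf₀ : f 0 = a₀ := by simpa [sub_eq_zero] using hf.eq_zero_imp.self_of_nhds
  have hexpand : ∀ x ≠ 0, f x = a₀ + a₁ * x + x ^ 2 * g x := fun x hx => by
    simp only [g]; field_simp; ring
  have hg : Tendsto g (𝓝[>] 0) (𝓝 a₂) :=
    (tendsto_div_sq_of_isBigO hf).mono_left (nhdsWithin_mono _ fun x hx => ne_of_gt hx)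
  have hx : Tendsto (fun x : ℝ => x) (𝓝[>] 0) (𝓝 0) := nhdsWithin_le_nhds
  have hg₂ : Tendsto (fun x => g (2 * x)) (𝓝[>] 0) (𝓝 a₂) :=
    hg.comp (tendsto_nhdsWithin_iff.mpr ⟨by simpa using hx.const_mul 2,
      eventually_nhdsWithin_of_forall fun x hx => by simpa using hx⟩)
  -- the limit of `(f x ^ 2 - f 0 * f (2 * x)) / x ^ 2`
  have hquot : Tendsto (fun x => a₁ ^ 2 + 2 * a₀ * g x - 4 * a₀ * g (2 * x) + 2 * a₁ * x * g x
      + x ^ 2 * g x ^ 2) (𝓝[>] 0) (𝓝 (a₁ ^ 2 - 2 * a₀ * a₂)) := by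
    convert ((((hg.const_mul (2 * a₀)).const_add (a₁ ^ 2)).sub (hg₂.const_mul (4 * a₀))).add
      ((hx.const_mul (2 * a₁)).mul hg)).add ((hx.pow 2).mul (hg.pow 2)) using 2
    ring
  obtain ⟨x, hx₀ : 0 < x, hneg⟩ := (eventually_mem_nhdsWithin.and
    (hquot.eventually (gt_mem_nhds (show a₁ ^ 2 - 2 * a₀ * a₂ < 0 by linarith)))).exists
  have hsq : f x ^ 2 - f 0 * f (2 * x) = x ^ 2 * (a₁ ^ 2 + 2 * a₀ * g x - 4 * a₀ * g (2 * x)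
      + 2 * a₁ * x * g x + x ^ 2 * g x ^ 2) := by
    rw [hf₀, hexpand x hx₀.ne', hexpand (2 * x) (by positivity)]
    ring
  intro hlc
  have hmid := hlc.mul_le_sq self_mem_Ici (by simp; positivity : 2 * x ∈ Ici 0) (hf₀ ▸ ha₀.le)
  rw [show (0 + 2 * x) / 2 = x by ring] at hmid
  linarith [mul_neg_of_pos_of_neg (pow_pos hx₀ 2) hneg]

noncomputable def wrightCoeff (ρ β : ℝ) (n : ℕ) : ℝ :=
  ((n.factorial : ℝ) * Gamma (β + ρ * n))⁻¹

lemma wright_eq_ofScalarsSum (ρ β : ℝ) : wright ρ β = ofScalarsSum (wrightCoeff ρ β) := by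
  funext x
  rw [ofScalars_sum_eq]
  exact tsum_congr fun n => by rw [smul_eq_mul, wrightCoeff, div_eq_inv_mul]

lemma one_le_radius_wrightCoeff {ρ β : ℝ} (hρ : ρ ∈ Ico (-1) 0) (hβ : 0 ≤ β) :
    1 ≤ (ofScalars ℝ (wrightCoeff ρ β)).radius := by
  obtain ⟨hρ₁, hρ₀⟩ := hρ
  refine ENNReal.coe_one ▸ le_radius_of_eventually_le _ (1 / π) ?_
  filter_upwards [eventually_ge_atTop ⌈(1 + β) / -ρ⌉₊] with n hn
  have hn' : 1 + β ≤ -ρ * n := by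
    rw [← div_le_iff₀' (by linarith)]
    exact (Nat.le_ceil _).trans (by exact_mod_cast hn)
  have hn₁ : (1 : ℝ) ≤ n := by nlinarith
  have hfac : (0 : ℝ) < n.factorial := by exact_mod_cast n.factorial_pos
  -- reflection bounds `1 / Γ(β + ρ n)` by `Γ(1 - β - ρ n) / π`, and `2 ≤ 1 - β - ρ n ≤ n + 1`
  have hΓ : Gamma (1 - (β + ρ * n)) ≤ n.factorial := by
    rw [← Gamma_nat_eq_factorial]
    refine Gamma_strictMonoOn_Ici.monotoneOn (by simp; linarith) (by simp; linarith) ?_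
    nlinarith [(n.cast_nonneg : (0 : ℝ) ≤ n)]
  rw [ofScalars_norm, NNReal.coe_one, one_pow, mul_one, norm_eq_abs, wrightCoeff, mul_inv, abs_mul,
    abs_inv, abs_of_pos hfac]
  calc (n.factorial : ℝ)⁻¹ * |(Gamma (β + ρ * n))⁻¹|
      ≤ (n.factorial : ℝ)⁻¹ * (Gamma (1 - (β + ρ * n)) / π) :=
        by gcongr; exact abs_inv_Gamma_le (by linarith)
    _ ≤ (n.factorial : ℝ)⁻¹ * (n.factorial / π) := by gcongr
    _ = 1 / π := by field_simp

lemma wright_sub_quadratic_isBigO {ρ β : ℝ} (hρ : ρ ∈ Ico (-1) 0) (hβ : 0 ≤ β) :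
    (fun x => wright ρ β x -
      ((Gamma β)⁻¹ + (Gamma (β + ρ))⁻¹ * x + (2 * Gamma (β + 2 * ρ))⁻¹ * x ^ 2))
      =O[𝓝 0] fun x => x ^ 3 := by
  have hp := ((ofScalars ℝ (wrightCoeff ρ β)).hasFPowerSeriesOnBall
    (zero_lt_one.trans_le (one_le_radius_wrightCoeff hρ hβ))).hasFPowerSeriesAt
  rw [← ofScalarsSum, ← wright_eq_ofScalarsSum] at hp
  refine ((hp.isBigO_sub_partialSum_pow 3).trans (isBigO_of_le _ fun x => by simp)).congr_left
    fun x => ?_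
  simp [partialSum, Finset.sum_range_succ, wrightCoeff, mul_comm ρ 2]
  ring

theorem not_logConcaveOn_wright_neg {α β : ℝ} (hβ : 0 < β) (hα : α ∈ Ioc 0 1)
    (h : 1 / Gamma (β - α) ^ 2 < 1 / (Gamma β * Gamma (β - 2 * α))) :
    ¬ LogConcaveOn' (fun x => wright (-α) β (-x)) (Ici 0) := by
  have hρ : -α ∈ Ico (-1) 0 := ⟨neg_le_neg hα.2, neg_lt_zero.mpr hα.1⟩
  have hf := (wright_sub_quadratic_isBigO hρ hβ.le).comp_tendsto
    (by simpa using tendsto_neg (0 : ℝ))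
  refine not_logConcaveOn_Ici_of_isBigO (a₁ := -(Gamma (β - α))⁻¹)
    (a₂ := (2 * Gamma (β - 2 * α))⁻¹) ?_ (inv_pos.mpr (Gamma_pos_of_pos hβ)) ?_
  · refine isBigO_neg_right.mp (hf.congr (fun x => ?_) fun x => ?_)
    · simp only [Function.comp_apply, ← sub_eq_add_neg, mul_neg]
      ring
    · simp [neg_pow, Odd.neg_one_pow (by decide : Odd 3)]
  · have e₁ : (-(Gamma (β - α))⁻¹) ^ 2 = 1 / Gamma (β - α) ^ 2 := by rw [neg_sq, inv_pow, one_div]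
    have e₂ : 2 * (Gamma β)⁻¹ * (2 * Gamma (β - 2 * α))⁻¹ = 1 / (Gamma β * Gamma (β - 2 * α)) := by
      rw [mul_inv, one_div, mul_inv]; ring
    rwa [e₁, e₂]

/-- Theorem D (a): for `β ∈ (0,1)` there exists a unique `α_*(β) ∈ ((β+1)/2, 1)`
solving `1/Γ(β-α)² = 1/(Γ(β)Γ(β-2α))`, and for every `α ∈ (α_*(β), 1)` the function
`x ↦ φ(-α, β, -x)` is not log-concave on `[0,∞)`. -/
theorem wright_not_logConcave (β : ℝ) (hβ : β ∈ Set.Ioo (0 : ℝ) 1) :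
    ∃ αs : ℝ, αs ∈ Set.Ioo ((β + 1) / 2) 1 ∧
      1 / Real.Gamma (β - αs) ^ 2 = 1 / (Real.Gamma β * Real.Gamma (β - 2 * αs)) ∧
      (∀ a ∈ Set.Ioo ((β + 1) / 2) 1,
        1 / Real.Gamma (β - a) ^ 2 = 1 / (Real.Gamma β * Real.Gamma (β - 2 * a)) →
          a = αs) ∧
      ∀ α : ℝ, αs < α → α < 1 →
        ¬ LogConcaveOn' (fun x => wright (-α) β (-x)) (Set.Ici 0) := by
  obtain ⟨αs, hαs, hroot⟩ := exists_one_div_Gamma_sq_eq hβ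
  have hlog := (one_div_Gamma_sq_eq_iff hβ hαs).mp hroot
  refine ⟨αs, hαs, hroot, fun a ha heq => ?_, fun α hα hα₁ => ?_⟩
  · exact (strictMonoOn_logGammaRatio hβ).injOn ha hαs
      (((one_div_Gamma_sq_eq_iff hβ ha).mp heq).trans hlog.symm)
  · have hα' : α ∈ Ioo ((β + 1) / 2) 1 := ⟨hαs.1.trans hα, hα₁⟩
    refine not_logConcaveOn_wright_neg hβ.1 ⟨by linarith [hα'.1, hβ.1], hα₁.le⟩ ?_
    rw [one_div_Gamma_sq_lt_iff hβ hα', ← hlog]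
    exact strictMonoOn_logGammaRatio hβ hαs hα' hα
end

section
/- For every α > 0 and β > 0, the function x ↦ 1 / E_{α,β}(x) is convex on [0,∞), where E_{α,β}(x) = ∑_{n=0}^∞ x^n / Γ(β + αn); here E_{α,β}(x) > 0 for all x ≥ 0, so the reciprocal is well defined. -/
/-!
Write `E_{α,β}(x) = ∑ cₙ xⁿ` with `cₙ = 1 / Γ(β + αn)`. Since `(1/f)'' = (2f'² - f f'') / f³`, it
suffices that `E E'' ≤ 2E'²` on `[0, ∞)`, and this is checked coefficientwise: the coefficient of
`x^(M-2)` in `2E'² - E E''` is `∑_{p+q=M} (2pq - q(q-1)) c_p c_q`. Log-convexity of `Γ` makes `c`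
log-concave, so for `p + q = M` the product `c_p c_q` increases with `pq`. Chebyshev's sum
inequality against the weights `pq`, which sum to `(M+1)M(M-1)/6`, gives
`M(M-1) ∑ c_p c_q ≤ 6 ∑ pq c_p c_q`, the required inequality once the sum is symmetrised in `p, q`.
Log-convexity of `Γ` also gives `Γ(y + α) / Γ(y) ≥ (y - 1)^α`, whence `E` is entire.
-/

noncomputable def mittagLeffler (α β z : ℝ) : ℝ :=
  ∑' n : ℕ, z ^ n / Real.Gamma (β + α * n)

open Real Filter Finset

theorem ConvexOn.map_add_sub_map_le {𝕜 : Type*} [Field 𝕜] [LinearOrder 𝕜] [IsStrictOrderedRing 𝕜]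
    {s : Set 𝕜} {f : 𝕜 → 𝕜} (hf : ConvexOn 𝕜 s f) {a b t : 𝕜} (ha : a ∈ s) (hbt : b + t ∈ s)
    (hab : a ≤ b) (ht : 0 ≤ t) : f (a + t) - f a ≤ f (b + t) - f b := by
  rcases ht.eq_or_lt with rfl | ht
  · simp
  rcases hab.eq_or_lt with rfl | hab
  · rfl
  have hs := hf.1.ordConnected
  have hat : a + t ∈ s := hs.out ha hbt ⟨by linarith, by linarith⟩
  have hb : b ∈ s := hs.out ha hbt ⟨hab.le, by linarith⟩
  have h1 : slope f a (a + t) ≤ slope f a (b + t) :=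
    hf.slope_mono ha ⟨hat, by simp [ht.ne']⟩ ⟨hbt, by simp; linarith⟩ (by linarith)
  have h2 : slope f (b + t) a ≤ slope f (b + t) b :=
    hf.slope_mono hbt ⟨ha, by simp; linarith⟩ ⟨hb, by simp [ht.ne']⟩ hab.le
  rw [slope_comm f (b + t) a, slope_comm f (b + t) b] at h2
  have h := h1.trans h2
  simp only [slope_def_field, add_sub_cancel_left] at h
  rwa [div_le_div_iff_of_pos_right ht] at h

namespace Real

theorem Gamma_add_mul_Gamma_le {a b t : ℝ} (ha : 0 < a) (hab : a ≤ b) (ht : 0 ≤ t) :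
    Gamma (a + t) * Gamma b ≤ Gamma a * Gamma (b + t) := by
  have hb : 0 < b := ha.trans_le hab
  have h := convexOn_log_Gamma.map_add_sub_map_le ha (show 0 < b + t by linarith) hab ht
  simp only [Function.comp_apply] at h
  rw [← log_div (Gamma_pos_of_pos (by linarith)).ne' (Gamma_pos_of_pos ha).ne',
    ← log_div (Gamma_pos_of_pos (by linarith)).ne' (Gamma_pos_of_pos hb).ne',
    log_le_log_iff (by positivity [Gamma_pos_of_pos ha]) (by positivity),
    div_le_div_iff₀ (Gamma_pos_of_pos ha) (Gamma_pos_of_pos hb)] at h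
  linarith

theorem rpow_le_Gamma_add_div_Gamma {y α : ℝ} (hy : 1 < y) (hα : 0 < α) :
    (y - 1) ^ α ≤ Gamma (y + α) / Gamma y := by
  have hy0 : 0 < y := by linarith
  have h := convexOn_log_Gamma.slope_mono_adjacent (x := y - 1) (y := y) (z := y + α)
    (sub_pos.2 hy) (show 0 < y + α by linarith) (by linarith) (by linarith)
  have hlog : log (Gamma y) = log (y - 1) + log (Gamma (y - 1)) := by
    have hΓ : Gamma y = (y - 1) * Gamma (y - 1) := by
      simpa using Gamma_add_one (sub_pos.2 hy).ne'
    rw [hΓ, log_mul (sub_pos.2 hy).ne' (Gamma_pos_of_pos (sub_pos.2 hy)).ne']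
  simp only [Function.comp_apply, sub_sub_cancel, div_one, add_sub_cancel_left] at h
  rw [le_div_iff₀ hα, hlog, add_sub_cancel_right] at h
  rw [rpow_def_of_pos (sub_pos.2 hy), ← le_log_iff_exp_le (by positivity [Gamma_pos_of_pos hy0]),
    log_div (Gamma_pos_of_pos (by linarith)).ne' (Gamma_pos_of_pos hy0).ne']
  linarith

theorem tendsto_Gamma_add_div_Gamma_atTop {α : ℝ} (hα : 0 < α) :
    Tendsto (fun y => Gamma (y + α) / Gamma y) atTop atTop := by
  refine tendsto_atTop_mono' _ ?_
    ((tendsto_rpow_atTop hα).comp (tendsto_atTop_add_const_right _ (-1) tendsto_id))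
  filter_upwards [eventually_gt_atTop 1] with y hy
  simpa [← sub_eq_add_neg] using rpow_le_Gamma_add_div_Gamma hy hα

end Real

section PowerSeries

def derivCoeff (a : ℕ → ℝ) (n : ℕ) : ℝ := (n + 1) * a (n + 1)

variable {a b : ℕ → ℝ}

theorem summable_derivCoeff_mul_pow (ha : ∀ x, Summable fun n => a n * x ^ n) (x : ℝ) :
    Summable fun n => derivCoeff a n * x ^ n := by
  set r := |x| + 1
  have hr : 1 ≤ r := by simp [r]
  have hs : Summable fun n => |a (n + 1)| * (2 * r) ^ (n + 1) := by
    simpa [abs_mul, abs_of_pos (show 0 < 2 * r by positivity)] using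
      ((summable_nat_add_iff 1).2 (ha (2 * r))).abs
  refine hs.of_norm_bounded fun n => ?_
  have hn : (n : ℝ) + 1 ≤ 2 ^ (n + 1) := by
    exact_mod_cast (Nat.lt_two_pow_self (n := n + 1)).le
  have hx : |x| ^ n ≤ r ^ (n + 1) :=
    (pow_le_pow_left₀ (abs_nonneg x) (by simp [r]) n).trans (pow_le_pow_right₀ hr n.le_succ)
  rw [Real.norm_eq_abs, derivCoeff, abs_mul, abs_mul, abs_pow, mul_pow]
  calc |(n : ℝ) + 1| * |a (n + 1)| * |x| ^ n ≤ 2 ^ (n + 1) * |a (n + 1)| * r ^ (n + 1) := by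
        rw [abs_of_pos (by positivity)]; gcongr
    _ = |a (n + 1)| * (2 ^ (n + 1) * r ^ (n + 1)) := by ring

theorem hasDerivAt_tsum_mul_pow (ha : ∀ x, Summable fun n => a n * x ^ n) (x : ℝ) :
    HasDerivAt (fun y => ∑' n, a n * y ^ n) (∑' n, derivCoeff a n * x ^ n) x := by
  set r := |x| + 1
  have hr : 0 < r := by positivity
  have hxr : x ∈ Set.Ioo (-r) r := abs_lt.1 (by simp [r])
  have hshift : (fun y => ∑' n, a n * y ^ n) = fun y => a 0 + ∑' n, a (n + 1) * y ^ (n + 1) := by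
    funext y; simpa using (ha y).tsum_eq_zero_add
  rw [hshift]
  refine HasDerivAt.const_add _ <| hasDerivAt_tsum_of_isPreconnected
    (g := fun n y => a (n + 1) * y ^ (n + 1)) (g' := fun n y => derivCoeff a n * y ^ n)
    (u := fun n => |derivCoeff a n| * r ^ n) (t := Set.Ioo (-r) r)
    (by simpa [abs_mul, abs_of_pos hr] using (summable_derivCoeff_mul_pow ha r).abs)
    isOpen_Ioo isPreconnected_Ioo (fun n y _ => ?_) (fun n y hy => ?_)
    (y₀ := 0) ⟨neg_lt_zero.2 hr, hr⟩ (by simp) hxr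
  · refine ((hasDerivAt_pow (n + 1) y).const_mul (a (n + 1))).congr_deriv ?_
    rw [derivCoeff, Nat.add_sub_cancel]; push_cast; ring
  · rw [Real.norm_eq_abs, abs_mul, abs_pow]
    gcongr
    exact abs_le.2 ⟨hy.1.le, hy.2.le⟩

theorem hasSum_sum_antidiagonal_mul_pow {x : ℝ} (ha : Summable fun n => a n * x ^ n)
    (hb : Summable fun n => b n * x ^ n) :
    HasSum (fun m => (∑ kl ∈ antidiagonal m, a kl.1 * b kl.2) * x ^ m)
      ((∑' n, a n * x ^ n) * ∑' n, b n * x ^ n) := by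
  have hna : Summable fun n => ‖a n * x ^ n‖ := by simpa using ha.abs
  have hnb : Summable fun n => ‖b n * x ^ n‖ := by simpa using hb.abs
  have hterm : ∀ m, ∑ kl ∈ antidiagonal m, a kl.1 * x ^ kl.1 * (b kl.2 * x ^ kl.2) =
      (∑ kl ∈ antidiagonal m, a kl.1 * b kl.2) * x ^ m := fun m => by
    rw [sum_mul]
    refine sum_congr rfl fun kl hkl => ?_
    rw [← mem_antidiagonal.1 hkl, pow_add]
    ring
  rw [tsum_mul_tsum_eq_tsum_sum_antidiagonal_of_summable_norm hna hnb]
  simpa only [hterm] using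
    (summable_norm_sum_mul_antidiagonal_of_summable_norm hna hnb).of_norm.hasSum

theorem tsum_mul_pow_pos (ha0 : 0 < a 0) (ha : ∀ n, 0 ≤ a n) {x : ℝ} (hx : 0 ≤ x)
    (hs : Summable fun n => a n * x ^ n) : 0 < ∑' n, a n * x ^ n :=
  hs.tsum_pos (fun n => mul_nonneg (ha n) (pow_nonneg hx n)) 0 (by simpa using ha0)

end PowerSeries

theorem convexOn_one_div_of_mul_le_two_mul_sq {D : Set ℝ} (hD : Convex ℝ D) {f f' f'' : ℝ → ℝ}
    (hf : ContinuousOn f D) (hpos : ∀ x ∈ D, 0 < f x)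
    (hf' : ∀ x ∈ interior D, HasDerivAt f (f' x) x)
    (hf'' : ∀ x ∈ interior D, HasDerivAt f' (f'' x) x)
    (h : ∀ x ∈ interior D, f x * f'' x ≤ 2 * f' x ^ 2) :
    ConvexOn ℝ D fun x => 1 / f x := by
  have hposi : ∀ x ∈ interior D, 0 < f x := fun x hx => hpos x (interior_subset hx)
  refine convexOn_of_hasDerivWithinAt2_nonneg (f' := fun x => -f' x / f x ^ 2)
    (f'' := fun x => (2 * f' x ^ 2 - f x * f'' x) / f x ^ 3) hD
    (continuousOn_const.div hf fun x hx => (hpos x hx).ne') (fun x hx => ?_) (fun x hx => ?_)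
    (fun x hx => div_nonneg (by linarith [h x hx]) (pow_pos (hposi x hx) 3).le)
  · have := (hasDerivAt_const x (1 : ℝ)).div (hf' x hx) (hposi x hx).ne'
    refine this.hasDerivWithinAt.congr_deriv ?_
    ring
  · have := (hf'' x hx).neg.div ((hf' x hx).pow 2) (pow_pos (hposi x hx) 2).ne'
    refine this.hasDerivWithinAt.congr_deriv ?_
    simp only [Pi.pow_apply, Pi.neg_apply]
    field_simp [(hposi x hx).ne']
    ring

theorem sum_antidiagonal_snd (M : ℕ) : ∑ x ∈ antidiagonal M, (x.2 : ℝ) = M * (M + 1) / 2 := by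
  induction M with
  | zero => simp
  | succ M ih => rw [Nat.sum_antidiagonal_succ, ih]; push_cast; ring

theorem sum_antidiagonal_fst_mul_snd (M : ℕ) :
    ∑ x ∈ antidiagonal M, (x.1 : ℝ) * x.2 = (M + 1) * M * (M - 1) / 6 := by
  induction M with
  | zero => simp
  | succ M ih =>
    simp only [Nat.sum_antidiagonal_succ, Nat.cast_add, Nat.cast_one, add_mul, one_mul,
      sum_add_distrib, ih, sum_antidiagonal_snd]
    push_cast; ring

/-- For positive `c` this is log-concavity: the ratios `c (k + n) / c k` are antitone in `k`. -/
def HasAntitoneShiftRatios (c : ℕ → ℝ) : Prop :=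
  ∀ a b n, a ≤ b → c (b + n) * c a ≤ c (a + n) * c b

section ShiftRatio

variable {c : ℕ → ℝ}

theorem mul_le_mul_of_add_eq_of_mul_lt (hc : HasAntitoneShiftRatios c)
    {p q p' q' : ℕ} (hsum : p + q = p' + q') (hlt : p * q < p' * q') :
    c p * c q ≤ c p' * c q' := by
  suffices key : ∀ {p q p' q' : ℕ}, p ≤ q → p' ≤ q' → p + q = p' + q' → p * q < p' * q' →
      c p * c q ≤ c p' * c q' by
    have hmin : ∀ m n, c m * c n = c (min m n) * c (max m n) := fun m n => by
      rcases le_total m n with h | h <;> simp [h, mul_comm]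
    rw [hmin p, hmin p']
    refine key min_le_max min_le_max ?_ ?_
    · rwa [min_add_max, min_add_max]
    · rwa [min_mul_max, min_mul_max]
  intro p q p' q' hpq hpq' hsum hlt
  have hpp' : p ≤ p' := by
    by_contra! h
    nlinarith
  have h := hc p q' (p' - p) (by omega)
  rwa [show q' + (p' - p) = q by omega, show p + (p' - p) = p' by omega, mul_comm (c q)] at h

theorem sum_antidiagonal_mul_sub_one_le (hc : HasAntitoneShiftRatios c) (M : ℕ) :
    ∑ x ∈ antidiagonal M, (x.2 : ℝ) * (x.2 - 1) * (c x.1 * c x.2) ≤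
      2 * ∑ x ∈ antidiagonal M, (x.1 : ℝ) * x.2 * (c x.1 * c x.2) := by
  set D : ℕ × ℕ → ℝ := fun x => c x.1 * c x.2
  have hmono : MonovaryOn D (fun x => (x.1 : ℝ) * x.2) (antidiagonal M : Set (ℕ × ℕ)) := by
    intro x hx y hy hlt
    have hsum : x.1 + x.2 = y.1 + y.2 := (mem_antidiagonal.1 hx).trans (mem_antidiagonal.1 hy).symm
    have hlt' : (x.1 : ℝ) * x.2 < y.1 * y.2 := hlt
    exact mul_le_mul_of_add_eq_of_mul_lt hc hsum (by exact_mod_cast hlt')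
  have hcheb := hmono.sum_mul_sum_le_card_mul_sum
  rw [sum_antidiagonal_fst_mul_snd, Nat.card_antidiagonal] at hcheb
  have hswap : ∑ x ∈ antidiagonal M, (x.2 : ℝ) * (x.2 - 1) * D x =
      ∑ x ∈ antidiagonal M, (x.1 : ℝ) * (x.1 - 1) * D x := by
    rw [← Nat.sum_antidiagonal_swap]
    refine sum_congr rfl fun x _ => ?_
    simp only [Prod.fst_swap, Prod.snd_swap, D]
    ring
  have hpair : ∀ x ∈ antidiagonal M, (x.1 : ℝ) * (x.1 - 1) * D x + x.2 * (x.2 - 1) * D x =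
      M * (M - 1) * D x - 2 * (x.1 * x.2 * D x) := fun x hx => by
    rw [← mem_antidiagonal.1 hx]; push_cast; ring
  have htwice := sum_congr rfl hpair
  rw [sum_add_distrib, ← hswap, sum_sub_distrib, ← mul_sum, ← mul_sum] at htwice
  simp only [mul_comm (D _)] at hcheb
  have hST : (M : ℝ) * (M - 1) * ∑ x ∈ antidiagonal M, D x ≤
      6 * ∑ x ∈ antidiagonal M, (x.1 : ℝ) * x.2 * D x := by
    refine le_of_mul_le_mul_left ?_ (show (0 : ℝ) < M + 1 by positivity)
    push_cast at hcheb
    linarith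
  linarith

theorem sum_antidiagonal_mul_derivCoeff_le (hc : HasAntitoneShiftRatios c) (m : ℕ) :
    ∑ x ∈ antidiagonal m, c x.1 * derivCoeff (derivCoeff c) x.2 ≤
      2 * ∑ x ∈ antidiagonal m, derivCoeff c x.1 * derivCoeff c x.2 := by
  have hL : ∑ x ∈ antidiagonal (m + 2), (x.2 : ℝ) * (x.2 - 1) * (c x.1 * c x.2) =
      ∑ x ∈ antidiagonal m, c x.1 * derivCoeff (derivCoeff c) x.2 := by
    rw [Nat.sum_antidiagonal_succ', Nat.sum_antidiagonal_succ']
    simp only [derivCoeff]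
    push_cast
    simp only [zero_mul, sub_self, mul_zero, zero_add]
    refine sum_congr rfl fun x _ => ?_
    ring
  have hR : ∑ x ∈ antidiagonal (m + 2), (x.1 : ℝ) * x.2 * (c x.1 * c x.2) =
      ∑ x ∈ antidiagonal m, derivCoeff c x.1 * derivCoeff c x.2 := by
    rw [Nat.sum_antidiagonal_succ, Nat.sum_antidiagonal_succ']
    simp only [derivCoeff]
    push_cast
    simp only [zero_mul, mul_zero, zero_add]
    refine sum_congr rfl fun x _ => ?_
    ring
  simpa only [hL, hR] using sum_antidiagonal_mul_sub_one_le hc (m + 2)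

theorem tsum_mul_tsum_derivCoeff_le_two_mul_sq (hc : HasAntitoneShiftRatios c)
    (hs : ∀ x, Summable fun n => c n * x ^ n) {x : ℝ} (hx : 0 ≤ x) :
    (∑' n, c n * x ^ n) * (∑' n, derivCoeff (derivCoeff c) n * x ^ n) ≤
      2 * (∑' n, derivCoeff c n * x ^ n) ^ 2 := by
  have hs' := summable_derivCoeff_mul_pow hs
  rw [sq]
  refine hasSum_le (fun m => ?_)
    (hasSum_sum_antidiagonal_mul_pow (hs x) (summable_derivCoeff_mul_pow hs' x))
    ((hasSum_sum_antidiagonal_mul_pow (hs' x) (hs' x)).mul_left 2)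
  rw [← mul_assoc]
  exact mul_le_mul_of_nonneg_right (sum_antidiagonal_mul_derivCoeff_le hc m) (pow_nonneg hx m)

end ShiftRatio

section MittagLeffler

variable {α β : ℝ}

noncomputable def mittagLefflerCoeff (α β : ℝ) (n : ℕ) : ℝ := (Gamma (β + α * n))⁻¹

theorem mittagLeffler_eq_tsum (α β x : ℝ) :
    mittagLeffler α β x = ∑' n, mittagLefflerCoeff α β n * x ^ n := by
  simp only [mittagLeffler, mittagLefflerCoeff, div_eq_inv_mul]

theorem mittagLefflerCoeff_pos (hα : 0 ≤ α) (hβ : 0 < β) (n : ℕ) : 0 < mittagLefflerCoeff α β n :=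
  inv_pos.2 (Gamma_pos_of_pos (by positivity))

theorem hasAntitoneShiftRatios_mittagLefflerCoeff (hα : 0 ≤ α) (hβ : 0 < β) :
    HasAntitoneShiftRatios (mittagLefflerCoeff α β) := by
  intro a b n hab
  have h := Gamma_add_mul_Gamma_le (a := β + α * a) (b := β + α * b) (t := α * n) (by positivity)
    (by gcongr) (by positivity)
  have e : ∀ k m : ℕ, β + α * ((k + m : ℕ) : ℝ) = β + α * k + α * m := fun k m => by
    push_cast; ring
  simp only [mittagLefflerCoeff, ← mul_inv, e]
  rw [mul_comm (Gamma (β + α * b + α * n))]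
  exact inv_anti₀ (mul_pos (Gamma_pos_of_pos (by positivity)) (Gamma_pos_of_pos (by positivity))) h

theorem summable_mittagLefflerCoeff_mul_pow (hα : 0 < α) (hβ : 0 < β) (x : ℝ) :
    Summable fun n => mittagLefflerCoeff α β n * x ^ n := by
  have hy : Tendsto (fun n : ℕ => β + α * n) atTop atTop :=
    tendsto_atTop_add_const_left _ β (tendsto_natCast_atTop_atTop.const_mul_atTop hα)
  refine summable_of_ratio_norm_eventually_le (r := 1 / 2) (by norm_num) ?_
  filter_upwards [hy.eventually ((tendsto_Gamma_add_div_Gamma_atTop hα).eventually_ge_atTop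
    (2 * |x|))] with n hn
  have hΓ : 0 < Gamma (β + α * n) := Gamma_pos_of_pos (by positivity)
  have hΓ' : 0 < Gamma (β + α * n + α) := Gamma_pos_of_pos (by positivity)
  rw [le_div_iff₀ hΓ] at hn
  simp only [mittagLefflerCoeff, norm_mul, norm_inv, norm_pow, Real.norm_eq_abs, abs_of_pos hΓ,
    abs_of_pos hΓ', Nat.cast_succ, mul_add, mul_one, ← add_assoc]
  rw [inv_mul_le_iff₀ hΓ']
  calc |x| ^ (n + 1)
      = 2 * |x| * Gamma (β + α * n) * (1 / 2 * ((Gamma (β + α * n))⁻¹ * |x| ^ n)) := by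
        field_simp; ring
    _ ≤ Gamma (β + α * n + α) * (1 / 2 * ((Gamma (β + α * n))⁻¹ * |x| ^ n)) := by gcongr

end MittagLeffler

/-- Proposition 3: for every `α, β > 0`, `E_{α,β}` is positive on `[0,∞)` and
`x ↦ 1/E_{α,β}(x)` is convex on `[0,∞)`. -/
theorem mittagLeffler_reciprocal_convex (α β : ℝ) (hα : 0 < α) (hβ : 0 < β) :
    (∀ x : ℝ, 0 ≤ x → 0 < mittagLeffler α β x) ∧
    ConvexOn ℝ (Set.Ici (0 : ℝ)) (fun x => 1 / mittagLeffler α β x) := by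
  have hc := hasAntitoneShiftRatios_mittagLefflerCoeff hα.le hβ
  have hs := summable_mittagLefflerCoeff_mul_pow hα hβ
  have hs' := summable_derivCoeff_mul_pow hs
  have hE : mittagLeffler α β = fun x => ∑' n, mittagLefflerCoeff α β n * x ^ n :=
    funext (mittagLeffler_eq_tsum α β)
  have hpos : ∀ x : ℝ, 0 ≤ x → 0 < mittagLeffler α β x := fun x hx => by
    rw [hE]
    exact tsum_mul_pow_pos (mittagLefflerCoeff_pos hα.le hβ 0)
      (fun n => (mittagLefflerCoeff_pos hα.le hβ n).le) hx (hs x)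
  refine ⟨hpos, ?_⟩
  rw [hE] at hpos ⊢
  refine convexOn_one_div_of_mul_le_two_mul_sq (convex_Ici 0)
    (fun x _ => (hasDerivAt_tsum_mul_pow hs x).continuousAt.continuousWithinAt) hpos
    (fun x _ => hasDerivAt_tsum_mul_pow hs x) (fun x _ => hasDerivAt_tsum_mul_pow hs' x)
    fun x hx => tsum_mul_tsum_derivCoeff_le_two_mul_sq hc hs (interior_subset hx)
end

section
/- For every α > 0 and β > 0, the sequence u_n = (Γ(β + α(n+1)) / (n+1)) · ∑_{k=0}^n 1/(Γ(β + αk) · Γ(β + α(n−k))), n ≥ 0, is non-decreasing: u_n ≥ u_{n−1} for every n ≥ 1. -/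
/-!
Write `G x = Γ(β + α x)` and `c n k = G (n + 1) / (G k * G (n - k))`, so that `u n` is the mean
of `c n 0, …, c n n`. Log-convexity of `Γ` makes `G (x + 1) / G x` non-decreasing, which gives
`c n k ≤ c (n + 1) k` and `c n k ≤ c (n + 1) (k + 1)`. A mean of `n + 1` numbers each dominated
by both of its neighbours in a list of `n + 2` numbers is at most the mean of that list.
-/

open Finset

theorem ConvexOn.map_add_sub_map_le_map_add_sub_map {s : Set ℝ} {f : ℝ → ℝ}
    (hf : ConvexOn ℝ s f) {x y a : ℝ} (hx : x ∈ s) (hya : y + a ∈ s) (ha : 0 < a)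
    (hxy : x ≤ y) :
    f (x + a) - f x ≤ f (y + a) - f y := by
  have hxa : x + a ∈ s := hf.1.ordConnected.out hx hya ⟨by linarith, by linarith⟩
  have hy : y ∈ s := hf.1.ordConnected.out hx hya ⟨hxy, by linarith⟩
  have h₁ : slope f x (x + a) ≤ slope f x (y + a) :=
    hf.slope_mono hx ⟨hxa, by simp [ha.ne']⟩ ⟨hya, by simp; linarith⟩ (by linarith)
  have h₂ : slope f (y + a) x ≤ slope f (y + a) y :=
    hf.slope_mono hya ⟨hx, by simp; linarith⟩ ⟨hy, by simp [ha.ne']⟩ hxy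
  rw [slope_comm f (y + a) x, slope_comm f (y + a) y] at h₂
  have h := h₁.trans h₂
  rwa [slope_def_field, slope_def_field, add_sub_cancel_left, add_sub_cancel_left,
    div_le_div_iff_of_pos_right ha] at h

theorem Real.Gamma_add_mul_Gamma_le_s18 {x y a : ℝ} (hx : 0 < x) (hxy : x ≤ y) (ha : 0 < a) :
    Gamma (x + a) * Gamma y ≤ Gamma x * Gamma (y + a) := by
  have hy : 0 < y := hx.trans_le hxy
  have h₁ := Gamma_pos_of_pos (add_pos hx ha)
  have h₂ := Gamma_pos_of_pos hy
  have h₃ := Gamma_pos_of_pos hx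
  have h₄ := Gamma_pos_of_pos (add_pos hy ha)
  have hlog := convexOn_log_Gamma.map_add_sub_map_le_map_add_sub_map hx
    (show y + a ∈ Set.Ioi 0 from add_pos hy ha) ha hxy
  simp only [Function.comp_apply] at hlog
  rw [← log_le_log_iff (by positivity) (by positivity), log_mul h₁.ne' h₂.ne',
    log_mul h₃.ne' h₄.ne']
  linarith

theorem sum_range_div_le_of_le_adjacent {a b : ℕ → ℝ} {n : ℕ} (h : ∀ k ≤ n, a k ≤ b k)
    (h' : ∀ k ≤ n, a k ≤ b (k + 1)) :
    (∑ k ∈ range (n + 1), a k) / ((n : ℝ) + 1) ≤ (∑ k ∈ range (n + 2), b k) / ((n : ℝ) + 2) := by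
  rw [div_le_div_iff₀ (by positivity) (by positivity)]
  calc (∑ k ∈ range (n + 1), a k) * ((n : ℝ) + 2)
      = ∑ k ∈ range (n + 1), (((n : ℝ) + 1 - k) * a k + ((k : ℝ) + 1) * a k) := by
        rw [sum_mul]; exact sum_congr rfl fun k _ => by ring
    _ ≤ ∑ k ∈ range (n + 1), (((n : ℝ) + 1 - k) * b k + ((k : ℝ) + 1) * b (k + 1)) := by
        refine sum_le_sum fun k hk => ?_
        have hk : k ≤ n := Nat.lt_succ_iff.mp (mem_range.mp hk)
        have hk' : (k : ℝ) ≤ n := by exact_mod_cast hk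
        gcongr
        exacts [by linarith, h k hk, h' k hk]
    _ = ∑ k ∈ range (n + 2), (((n : ℝ) + 1 - k) * b k + (k : ℝ) * b k) := by
        rw [sum_add_distrib, sum_add_distrib,
          sum_range_succ (fun k => ((n : ℝ) + 1 - k) * b k) (n + 1),
          sum_range_succ' (fun k => (k : ℝ) * b k) (n + 1)]
        push_cast
        ring
    _ = (∑ k ∈ range (n + 2), b k) * ((n : ℝ) + 1) := by
        rw [sum_mul]; exact sum_congr rfl fun k _ => by ring

theorem monotone_mul_sum_one_div_of_mul_le_mul {G : ℝ → ℝ} (hpos : ∀ x, 0 ≤ x → 0 < G x)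
    (hcross : ∀ x y, 0 ≤ x → x ≤ y → G (x + 1) * G y ≤ G x * G (y + 1)) :
    Monotone (fun n : ℕ => G ((n : ℝ) + 1) / ((n : ℝ) + 1) *
      ∑ k ∈ range (n + 1), 1 / (G k * G ((n : ℝ) - k))) := by
  refine monotone_nat_of_le_succ fun n => ?_
  have hG : ∀ k : ℕ, 0 < G k := fun k => hpos k k.cast_nonneg
  have hG' : ∀ k ≤ n, 0 < G ((n : ℝ) - k) :=
    fun k hk => hpos _ (sub_nonneg.2 (by exact_mod_cast hk))
  have hmean : ∀ m : ℕ, G ((m : ℝ) + 1) / ((m : ℝ) + 1) *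
      ∑ k ∈ range (m + 1), 1 / (G k * G ((m : ℝ) - k)) =
      (∑ k ∈ range (m + 1), G ((m : ℝ) + 1) / (G k * G ((m : ℝ) - k))) / ((m : ℝ) + 1) := by
    intro m
    rw [div_mul_eq_mul_div, mul_sum]
    simp only [mul_one_div]
  simp only [hmean]
  push_cast
  rw [show (n : ℝ) + 1 + 1 = n + 2 by ring]
  apply sum_range_div_le_of_le_adjacent
  · intro k hk
    have hk' : (k : ℝ) ≤ n := by exact_mod_cast hk
    have hcross_k := hcross (n - k) (n + 1) (sub_nonneg.2 hk') (by linarith)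
    rw [show (n : ℝ) - k + 1 = n + 1 - k by ring, show (n : ℝ) + 1 + 1 = n + 2 by ring]
      at hcross_k
    rw [div_le_div_iff₀ (mul_pos (hG k) (hG' k hk)) (mul_pos (hG k) (hpos _ (by linarith)))]
    linarith [mul_le_mul_of_nonneg_left hcross_k (hG k).le]
  · intro k hk
    have hcross_k := hcross k (n + 1) k.cast_nonneg (by exact_mod_cast hk.trans n.le_succ)
    rw [show (n : ℝ) + 1 + 1 = n + 2 by ring] at hcross_k
    rw [Nat.cast_succ, show (n : ℝ) + 1 - (k + 1) = n - k by ring,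
      div_le_div_iff₀ (mul_pos (hG k) (hG' k hk)) (mul_pos (hpos _ (by positivity)) (hG' k hk))]
    linarith [mul_le_mul_of_nonneg_left hcross_k (hG' k hk).le]

/-- The sequence `u_n = (Γ(β + α(n+1))/(n+1)) ∑_{k=0}^n 1/(Γ(β+αk)Γ(β+α(n-k)))`
is non-decreasing for all `α, β > 0`. -/
theorem u_seq_monotone (α β : ℝ) (hα : 0 < α) (hβ : 0 < β) :
    Monotone (fun n : ℕ =>
      (Real.Gamma (β + α * ((n : ℝ) + 1)) / ((n : ℝ) + 1)) *
        ∑ k ∈ Finset.range (n + 1),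
          1 / (Real.Gamma (β + α * (k : ℝ)) * Real.Gamma (β + α * ((n : ℝ) - (k : ℝ))))) :=
  monotone_mul_sum_one_div_of_mul_le_mul (G := fun x => Real.Gamma (β + α * x))
    (fun _ _ => Real.Gamma_pos_of_pos (by positivity))
    (fun x y hx hxy => by
      simpa only [mul_add, mul_one, ← add_assoc] using
        Real.Gamma_add_mul_Gamma_le_s18 (a := α) (by positivity) (by gcongr) hα)
end
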